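/- Let (g,[·,·],α) be a Hom-Lie algebra, V a vector space with a linear map β : V → V, and ρ : g → gl(V) a linear map. Then (V,β,ρ) is a representation of (g,[·,·],α) if and only if (g ⊕ V, [·,·]_ρ, α+β) is a Hom-Lie algebra, where [x+u, y+v]_ρ = [x,y] + ρ(x)v − ρ(y)u and (α+β)(x+u) = α(x)+β(u) for all x,y ∈ g, u,v ∈ V. -/
import Mathlib


/-- A Hom-Lie algebra structure: a skew-symmetric bilinear bracket and an algebra
morphism `α` satisfying the Hom-Jacobi identity. -/
def IsHomLie {K L : Type*} [Field K] [AddCommGroup L] [Module K L]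
    (bracket : L →ₗ[K] L →ₗ[K] L) (α : L →ₗ[K] L) : Prop :=
  (∀ x y, bracket x y = - bracket y x) ∧
  (∀ x y, α (bracket x y) = bracket (α x) (α y)) ∧
  (∀ x y z, bracket (α x) (bracket y z) + bracket (α y) (bracket z x)
      + bracket (α z) (bracket x y) = 0)

/-- A representation of a Hom-Lie algebra `(L, bracket, α)` on `V` with respect to `β`. -/
def IsHomLieRep {K L V : Type*} [Field K] [AddCommGroup L] [Module K L]
    [AddCommGroup V] [Module K V]
    (bracket : L →ₗ[K] L →ₗ[K] L) (α : L →ₗ[K] L)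
    (β : V →ₗ[K] V) (ρ : L →ₗ[K] Module.End K V) : Prop :=
  (∀ x, ρ (α x) ∘ₗ β = β ∘ₗ ρ x) ∧
  (∀ x y, ρ (bracket x y) ∘ₗ β = ρ (α x) ∘ₗ ρ y - ρ (α y) ∘ₗ ρ x)

/-- The semidirect product bracket `[x+u, y+v] = [x,y] + ρ(x)v - ρ(y)u` on `L × V`. -/
def sdBracket {K L V : Type*} [Field K] [AddCommGroup L] [Module K L]
    [AddCommGroup V] [Module K V]
    (bracket : L →ₗ[K] L →ₗ[K] L) (ρ : L →ₗ[K] Module.End K V) :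
    (L × V) →ₗ[K] (L × V) →ₗ[K] (L × V) :=
  LinearMap.mk₂ K (fun p q => (bracket p.1 q.1, ρ p.1 q.2 - ρ q.1 p.2))
    (fun p p' q => by
      simp only [Prod.fst_add, Prod.snd_add, map_add, LinearMap.add_apply,
        Prod.mk_add_mk, Prod.mk.injEq]
      exact ⟨trivial, by abel⟩)
    (fun c p q => by
      simp only [Prod.smul_fst, Prod.smul_snd, map_smul, LinearMap.smul_apply,
        Prod.smul_mk, Prod.mk.injEq, smul_sub])
    (fun p q q' => by
      simp only [Prod.fst_add, Prod.snd_add, map_add, LinearMap.add_apply,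
        Prod.mk_add_mk, Prod.mk.injEq]
      exact ⟨trivial, by abel⟩)
    (fun c p q => by
      simp only [Prod.smul_fst, Prod.smul_snd, map_smul, LinearMap.smul_apply,
        Prod.smul_mk, Prod.mk.injEq, smul_sub])

/-- Let `(g,[·,·],α)` be a Hom-Lie algebra, `V` a vector space with a
linear map `β : V → V`, and `ρ : g → gl(V)` a linear map.  Then `(V,β,ρ)` is a
representation of `(g,[·,·],α)` if and only if `(g ⊕ V, [·,·]_ρ, α+β)` is a Hom-Lie
algebra, where `[x+u,y+v]_ρ = [x,y] + ρ(x)v − ρ(y)u` and `(α+β)(x+u) = α(x)+β(u)`. -/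
theorem homLieRep_iff_semidirect_isHomLie
    {K L V : Type*} [Field K] [AddCommGroup L] [Module K L]
    [AddCommGroup V] [Module K V]
    (bracket : L →ₗ[K] L →ₗ[K] L) (α : L →ₗ[K] L)
    (hL : IsHomLie bracket α) (hα : Function.Bijective α)
    (β : V →ₗ[K] V) (ρ : L →ₗ[K] Module.End K V) :
    IsHomLieRep bracket α β ρ ↔
      IsHomLie (sdBracket bracket ρ) (α.prodMap β) := by

  obtain ⟨skew, mul, jac⟩ := hL
  constructor
  · rintro ⟨h1, h2⟩
    refine ⟨?_, ?_, ?_⟩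
    · intro p q
      simp only [sdBracket, LinearMap.mk₂_apply, Prod.neg_mk, Prod.mk.injEq]
      exact ⟨skew p.1 q.1, by abel⟩
    · intro p q
      simp only [sdBracket, LinearMap.mk₂_apply, LinearMap.prodMap_apply, Prod.map_apply,
        Prod.mk.injEq, map_sub]
      refine ⟨mul p.1 q.1, ?_⟩
      have e1 := LinearMap.ext_iff.mp (h1 p.1) q.2
      have e2 := LinearMap.ext_iff.mp (h1 q.1) p.2
      simp only [LinearMap.comp_apply, LinearMap.coe_comp, Function.comp_apply] at e1 e2
      rw [← e1, ← e2]
    · intro p q r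
      have e1 := LinearMap.ext_iff.mp (h2 q.1 r.1) p.2
      have e2 := LinearMap.ext_iff.mp (h2 r.1 p.1) q.2
      have e3 := LinearMap.ext_iff.mp (h2 p.1 q.1) r.2
      simp only [LinearMap.coe_comp, Function.comp_apply, LinearMap.sub_apply,
        LinearMap.comp_apply] at e1 e2 e3
      simp only [sdBracket, LinearMap.mk₂_apply, LinearMap.prodMap_apply, Prod.map_apply,
        Prod.mk_add_mk, Prod.mk_eq_zero, map_sub]
      refine ⟨jac p.1 q.1 r.1, ?_⟩
      rw [e1, e2, e3]
      abel
  · rintro ⟨hskew, hmul, hjac⟩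
    constructor
    · intro x
      ext v
      have := hmul (x, 0) (0, v)
      simp only [sdBracket, LinearMap.mk₂_apply, LinearMap.prodMap_apply, Prod.map_apply,
        map_zero, LinearMap.zero_apply, sub_zero, Prod.mk.injEq] at this
      simp only [LinearMap.coe_comp, Function.comp_apply]
      exact this.2.symm
    · intro x y
      ext v
      have := hjac (x, 0) (y, 0) (0, v)
      simp only [sdBracket, LinearMap.mk₂_apply, LinearMap.prodMap_apply, Prod.map_apply,
        map_zero, LinearMap.zero_apply, sub_zero, zero_sub, map_neg, Prod.mk_add_mk,
        Prod.mk_eq_zero, add_zero, zero_add] at this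
      simp only [LinearMap.coe_comp, Function.comp_apply, LinearMap.sub_apply]
      have h := this.2
      rw [eq_comm, ← sub_eq_zero, ← h]
      abel
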